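/- arXiv:1401.0579 — 2 statements merged into one kernel-verified Lean document; each statement's English description precedes it below -/
import Mathlib

section
/- (Few large coefficients) Let T̃ ⊆ [n] with |T̃| = d, let A be a nonnegative n×m matrix with entries at most Λ, and suppose: for every k the coefficient β_{k,T̃} = Σ_{i∈T̃} A^{(i)}_k; for every pair k ≠ k' the sets Q_k = {i ∈ T̃ : A^{(i)}_k ≥ τ} satisfy |Q_k ∩ Q_{k'}| ≤ κ; and τ ≤ σ⁴/(2ΔΛ² log n), κ ≤ σ⁸d/(8Δ²Λ⁶ log²n). Then the number of indices k with β_{k,T̃} ≥ dσ⁴/(ΔΛ² log n) is at most 4ΔΛ³ log n/σ⁴. -/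
/-!
A large coefficient `β_k ≤ Λ |Q_k| + τ d` forces `|Q_k| ≥ W := σ⁴ d / (2 Δ Λ³ log n)`. Counting,
for each pixel, the number `g_i` of large `Q_k` containing it, `∑ g_i = S := ∑_k |Q_k| ≥ |K| W` and
`∑ g_i² = ∑_{k,k'} |Q_k ∩ Q_k'| ≤ S + |K|² κ`, so Cauchy–Schwarz gives `S² ≤ d (S + |K|² κ)`.
Since `2 d κ ≤ W²`, this is incompatible with `|K| W > 2 d`.
-/

open Finset

section FamilyOfFinsets

variable {α ι : Type*} [DecidableEq α] {T : Finset α} {K : Finset ι} {Q : ι → Finset α} {κ : ℝ}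

theorem sum_card_eq_sum_card_filter_mem (hQT : ∀ k ∈ K, Q k ⊆ T) :
    ∑ k ∈ K, #(Q k) = ∑ i ∈ T, #{k ∈ K | i ∈ Q k} := by
  refine (sum_congr rfl fun k hk => ?_).trans
    (sum_card_bipartiteAbove_eq_sum_card_bipartiteBelow fun k i => i ∈ Q k)
  rw [bipartiteAbove, filter_mem_eq_inter, inter_eq_right.mpr (hQT k hk)]

theorem sum_sum_card_inter_eq_sum_sq (hQT : ∀ k ∈ K, Q k ⊆ T) :
    ∑ k ∈ K, ∑ k' ∈ K, #(Q k ∩ Q k') = ∑ i ∈ T, #{k ∈ K | i ∈ Q k} ^ 2 := by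
  rw [← sum_product', sum_card_eq_sum_card_filter_mem (K := K ×ˢ K)
    fun p hp => inter_subset_left.trans (hQT p.1 (mem_product.mp hp).1)]
  refine sum_congr rfl fun i _ => ?_
  simp only [mem_inter]
  rw [sq, ← card_product, ← filter_product]

theorem sq_sum_card_le_card_mul_sum_sum_card_inter (hQT : ∀ k ∈ K, Q k ⊆ T) :
    (∑ k ∈ K, #(Q k)) ^ 2 ≤ #T * ∑ k ∈ K, ∑ k' ∈ K, #(Q k ∩ Q k') := by
  rw [sum_card_eq_sum_card_filter_mem hQT, sum_sum_card_inter_eq_sum_sq hQT]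
  exact sq_sum_le_card_mul_sum_sq

theorem sum_sum_card_inter_le (hκ0 : 0 ≤ κ)
    (hκ : ∀ k ∈ K, ∀ k' ∈ K, k ≠ k' → (#(Q k ∩ Q k') : ℝ) ≤ κ) :
    ∑ k ∈ K, ∑ k' ∈ K, (#(Q k ∩ Q k') : ℝ) ≤ ∑ k ∈ K, (#(Q k) : ℝ) + #K ^ 2 * κ := by
  classical
  have hrow : ∀ k ∈ K, ∑ k' ∈ K, (#(Q k ∩ Q k') : ℝ) ≤ #(Q k) + #K * κ := fun k hk => by
    rw [← add_sum_erase _ _ hk, inter_self]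
    gcongr
    calc ∑ k' ∈ K.erase k, (#(Q k ∩ Q k') : ℝ)
        ≤ #(K.erase k) • κ := sum_le_card_nsmul _ _ _ fun k' hk' =>
          hκ k hk k' (mem_of_mem_erase hk') (ne_of_mem_erase hk').symm
      _ ≤ #K * κ := by
          rw [nsmul_eq_mul]
          gcongr
          exact erase_subset k K
  calc ∑ k ∈ K, ∑ k' ∈ K, (#(Q k ∩ Q k') : ℝ)
      ≤ ∑ k ∈ K, ((#(Q k) : ℝ) + #K * κ) := sum_le_sum hrow
    _ = ∑ k ∈ K, (#(Q k) : ℝ) + #K ^ 2 * κ := by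
        rw [sum_add_distrib, sum_const, nsmul_eq_mul]
        ring

theorem card_mul_le_two_mul_card_of_card_inter_le {W : ℝ} (hQT : ∀ k ∈ K, Q k ⊆ T)
    (hW : ∀ k ∈ K, W ≤ #(Q k)) (hκ0 : 0 ≤ κ)
    (hκ : ∀ k ∈ K, ∀ k' ∈ K, k ≠ k' → (#(Q k ∩ Q k') : ℝ) ≤ κ)
    (hκW : 2 * #T * κ ≤ W ^ 2) :
    #K * W ≤ 2 * #T := by
  set S : ℝ := ∑ k ∈ K, (#(Q k) : ℝ)
  set N : ℝ := (#K : ℝ)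
  set d : ℝ := (#T : ℝ)
  have hNW : N * W ≤ S := by
    simpa only [sum_const, nsmul_eq_mul] using sum_le_sum hW
  have hS : S ^ 2 ≤ d * (S + N ^ 2 * κ) := by
    have h := sq_sum_card_le_card_mul_sum_sum_card_inter hQT
    rify at h
    exact h.trans (mul_le_mul_of_nonneg_left (sum_sum_card_inter_le hκ0 hκ) (by positivity))
  by_contra! hlarge
  have hd : 0 ≤ d := by positivity
  -- `S ≥ N W > 2 d` makes `S (S - d) > (N W)² / 2`, while `S (S - d) ≤ d N² κ ≤ (N W)² / 2`.
  have hSS : (N * W) * (N * W - d) ≤ S * (S - d) :=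
    mul_le_mul hNW (by linarith) (by linarith) (by linarith)
  nlinarith [mul_le_mul_of_nonneg_left hκW (sq_nonneg N)]

end FamilyOfFinsets

theorem sum_le_mul_card_filter_add_mul_card {α : Type*} {s : Finset α} {f : α → ℝ} {Λ τ : ℝ}
    (hf : ∀ i ∈ s, f i ≤ Λ) (hτ : 0 ≤ τ) :
    ∑ i ∈ s, f i ≤ Λ * #{i ∈ s | τ ≤ f i} + τ * #s := by
  rw [← sum_filter_add_sum_filter_not s (fun i => τ ≤ f i)]
  gcongr
  · rw [mul_comm, ← nsmul_eq_mul]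
    exact sum_le_card_nsmul _ _ _ fun i hi => hf i (mem_of_mem_filter i hi)
  · calc ∑ i ∈ s with ¬τ ≤ f i, f i
        ≤ #{i ∈ s | ¬τ ≤ f i} • τ :=
          sum_le_card_nsmul _ _ _ fun i hi => (not_le.mp (mem_filter.mp hi).2).le
      _ ≤ τ * #s := by
          rw [nsmul_eq_mul, mul_comm]
          gcongr
          exact filter_subset _ s

theorem stmt_12_general (n p m : ℕ) (hn : 2 ≤ n)
    (A : Fin p → Fin m → ℝ) (Ttil : Finset (Fin p)) (σ τ κ Λ Δ : ℝ) (d : ℕ)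
    (hσ : 0 < σ) (hΛ : 1 ≤ Λ) (hΔ : 1 ≤ Δ) (hτ : 0 < τ)
    (hκ0 : 0 ≤ κ) (hd0 : 0 < d)
    (hAΛ : ∀ i k, A i k ≤ Λ)
    (hcard : Ttil.card = d)
    (hκcap : ∀ k k' : Fin m, k ≠ k' →
      (((Ttil.filter (fun i => τ ≤ A i k)) ∩ (Ttil.filter (fun i => τ ≤ A i k'))).card : ℝ)
        ≤ κ)
    (hτbound : τ ≤ σ ^ 4 / (2 * Δ * Λ ^ 2 * Real.log n))
    (hκbound : κ ≤ σ ^ 8 * d / (8 * Δ ^ 2 * Λ ^ 6 * (Real.log n) ^ 2)) :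
    ((univ.filter (fun k : Fin m =>
        (d : ℝ) * σ ^ 4 / (Δ * Λ ^ 2 * Real.log n) ≤ ∑ i ∈ Ttil, A i k)).card : ℝ) ≤
      4 * Δ * Λ ^ 3 * Real.log n / σ ^ 4 := by
  set L := Real.log n
  have hL : 0 < L := Real.log_pos (by exact_mod_cast hn)
  have hΛ0 : 0 < Λ := by linarith
  have hd : (0 : ℝ) < d := by exact_mod_cast hd0
  set K := univ.filter fun k : Fin m => d * σ ^ 4 / (Δ * Λ ^ 2 * L) ≤ ∑ i ∈ Ttil, A i k
  set W := σ ^ 4 * d / (2 * Δ * Λ ^ 3 * L) with hW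
  have hW0 : 0 < W := by positivity
  have hlarge : ∀ k ∈ K, W ≤ #{i ∈ Ttil | τ ≤ A i k} := fun k hk => by
    have hsum := (mem_filter.mp hk).2.trans
      (sum_le_mul_card_filter_add_mul_card (fun i _ => hAΛ i k) hτ.le)
    have hτd : τ * d ≤ σ ^ 4 / (2 * Δ * Λ ^ 2 * L) * d := by gcongr
    have hΛW : Λ * W = d * σ ^ 4 / (Δ * Λ ^ 2 * L) - σ ^ 4 / (2 * Δ * Λ ^ 2 * L) * d := by
      rw [hW]
      field_simp
      ring
    rw [hcard] at hsum
    exact le_of_mul_le_mul_left (by linarith) hΛ0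
  have hκW : 2 * #Ttil * κ ≤ W ^ 2 := calc
    2 * #Ttil * κ ≤ 2 * d * (σ ^ 8 * d / (8 * Δ ^ 2 * Λ ^ 6 * L ^ 2)) := by rw [hcard]; gcongr
    _ = W ^ 2 := by rw [hW]; field_simp; ring
  have hKW := card_mul_le_two_mul_card_of_card_inter_le (fun k _ => filter_subset _ Ttil) hlarge
    hκ0 (fun k _ k' _ hkk' => hκcap k k' hkk') hκW
  calc (#K : ℝ) ≤ 2 * #Ttil / W := (le_div_iff₀ hW0).mpr hKW
    _ = 4 * Δ * Λ ^ 3 * L / σ ^ 4 := by rw [hcard, hW]; field_simp; ring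

/-- Few large coefficients: for a set `T̃` of `d` pixels, with a nonnegative dictionary
bounded by `Λ`, small `τ`, and pairwise intersections of the sets
`Q_k = {i ∈ T̃ : A_{ik} ≥ τ}` at most `κ`, the number of features `k` with
`β_{k,T̃} ≥ d σ⁴/(Δ Λ² log n)` is at most `4 Δ Λ³ log n / σ⁴`. -/
theorem stmt_12 (n p m : ℕ) (hn : 2 ≤ n)
    (A : Fin p → Fin m → ℝ) (Ttil : Finset (Fin p)) (σ τ κ Λ Δ : ℝ) (d : ℕ)
    (hσ : 0 < σ) (hσ1 : σ ≤ 1) (hΛ : 1 ≤ Λ) (hΔ : 1 ≤ Δ) (hτ : 0 < τ)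
    (hκ0 : 0 ≤ κ) (hd0 : 0 < d)
    (hA0 : ∀ i k, 0 ≤ A i k) (hAΛ : ∀ i k, A i k ≤ Λ)
    (hcard : Ttil.card = d)
    (hκcap : ∀ k k' : Fin m, k ≠ k' →
      (((Ttil.filter (fun i => τ ≤ A i k)) ∩ (Ttil.filter (fun i => τ ≤ A i k'))).card : ℝ)
        ≤ κ)
    (hτbound : τ ≤ σ ^ 4 / (2 * Δ * Λ ^ 2 * Real.log n))
    (hκbound : κ ≤ σ ^ 8 * d / (8 * Δ ^ 2 * Λ ^ 6 * (Real.log n) ^ 2)) :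
    ((univ.filter (fun k : Fin m =>
        (d : ℝ) * σ ^ 4 / (Δ * Λ ^ 2 * Real.log n) ≤ ∑ i ∈ Ttil, A i k)).card : ℝ) ≤
      4 * Δ * Λ ^ 3 * Real.log n / σ ^ 4 :=
  stmt_12_general n p m hn A Ttil σ τ κ Λ Δ d hσ hΛ hΔ hτ hκ0 hd0 hAΛ hcard hκcap hτbound hκbound
end

section
/- Let S be a finite set of features, T a set of t pixels, and suppose each j ∈ S has at most W edges to T in G_τ (entries with |A^{(i)}_j| ≥ τ). Assume ρΣ_{j}(A^{(i)}_j)² ≤ 1 for every pixel i (variance normalization) and ρ·||A^{(i)}_{≤τ}||² ≤ γ for every i, where A^{(i)}_{≤τ} keeps only entries of magnitude ≤ τ. Then Var[Σ_{j∈S} β_{j,T} x_j] = ρΣ_{j∈S} β_{j,T}² ≤ 2tW + 2t²γ, where β_{j,T} = Σ_{i∈T} A^{(i)}_j and the x_j are independent Bernoulli(ρ). -/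
open MeasureTheory ProbabilityTheory Finset

/-!
The variance of a sum of independent Bernoulli(ρ) variables with coefficients `β_j` is at most
`ρ ∑ β_j²`. To bound `ρ ∑_{j∈S} β_{j,T}²`, split each `β_{j,T}` into its `G_τ` part and its
small part. Cauchy–Schwarz bounds the square of the first by `W ∑_{i∈T} A_{ij}²` (it has at
most `W` terms) and of the second by `t` times its sum of squares. Exchanging the sums over `j`
and `i`, each pixel then contributes at most `1` resp. `γ` by the two normalizations.
-/

section Bernoulli

variable {Ω : Type*} [MeasurableSpace Ω] {μ : Measure Ω} {X : Ω → ℝ}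

lemma integral_eq_measureReal_of_zero_one (hX : Measurable X) (h01 : ∀ ω, X ω = 0 ∨ X ω = 1) :
    ∫ ω, X ω ∂μ = μ.real {ω | X ω = 1} := by
  have hmeasSet : MeasurableSet {ω | X ω = 1} := hX (measurableSet_singleton 1)
  calc ∫ ω, X ω ∂μ = ∫ ω, {ω | X ω = 1}.indicator (fun _ => (1 : ℝ)) ω ∂μ := by
        congr 1
        ext ω
        rcases h01 ω with h | h <;> simp [h]
    _ = μ.real {ω | X ω = 1} := by simp [integral_indicator_const _ hmeasSet]

lemma variance_le_measureReal_of_zero_one [IsProbabilityMeasure μ] (hX : Measurable X)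
    (h01 : ∀ ω, X ω = 0 ∨ X ω = 1) : variance X μ ≤ μ.real {ω | X ω = 1} := by
  have hsq : X ^ 2 = X := by
    ext ω
    rcases h01 ω with h | h <;> simp [h]
  calc variance X μ ≤ μ[X ^ 2] := variance_le_expectation_sq hX.aestronglyMeasurable
    _ = μ.real {ω | X ω = 1} := by rw [hsq, integral_eq_measureReal_of_zero_one hX h01]

lemma memLp_two_of_zero_one [IsFiniteMeasure μ] (hX : Measurable X)
    (h01 : ∀ ω, X ω = 0 ∨ X ω = 1) : MemLp X 2 μ :=
  MemLp.of_bound hX.aestronglyMeasurable 1 <| Filter.Eventually.of_forall fun ω => by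
    rcases h01 ω with h | h <;> simp [h]

end Bernoulli

lemma variance_sum_const_mul_le {Ω ι : Type*} [MeasurableSpace Ω] {μ : Measure Ω}
    {x : ι → Ω → ℝ} {ρ : ℝ} (S : Finset ι) (b : ι → ℝ) (hind : iIndepFun x μ)
    (hmem : ∀ j ∈ S, MemLp (x j) 2 μ) (hvar : ∀ j ∈ S, variance (x j) μ ≤ ρ) :
    variance (fun ω => ∑ j ∈ S, b j * x j ω) μ ≤ ρ * ∑ j ∈ S, b j ^ 2 := by
  have hfun : (fun ω => ∑ j ∈ S, b j * x j ω) = ∑ j ∈ S, fun ω => b j * x j ω := by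
    ext ω
    simp
  have hpair : Set.Pairwise ↑S fun i j =>
      IndepFun (fun ω => b i * x i ω) (fun ω => b j * x j ω) μ := fun i _ j _ hij =>
    (hind.indepFun hij).comp (measurable_const_mul (b i)) (measurable_const_mul (b j))
  rw [hfun, IndepFun.variance_sum (fun j hj => (hmem j hj).const_mul (b j)) hpair, mul_sum]
  refine sum_le_sum fun j hj => ?_
  rw [variance_const_mul, mul_comm ρ]
  exact mul_le_mul_of_nonneg_left (hvar j hj) (sq_nonneg _)

section Algebra

variable {ι κ : Type*}

lemma sq_sum_le_of_split (s : Finset ι) (P : ι → Prop) [DecidablePred P] (f : ι → ℝ) :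
    (∑ i ∈ s, f i) ^ 2 ≤
      2 * #(s.filter P) * ∑ i ∈ s.filter P, f i ^ 2 +
        2 * #s * ∑ i ∈ s.filter (¬ P ·), f i ^ 2 := by
  rw [← sum_filter_add_sum_filter_not s P]
  have hlarge := sq_sum_le_card_mul_sum_sq (s := s.filter P) (f := f)
  have hsmall : (∑ i ∈ s.filter (¬ P ·), f i) ^ 2 ≤ #s * ∑ i ∈ s.filter (¬ P ·), f i ^ 2 :=
    sq_sum_le_card_mul_sum_sq.trans <| mul_le_mul_of_nonneg_right
      (by exact_mod_cast card_filter_le s _) (sum_nonneg fun i _ => sq_nonneg _)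
  nlinarith [sq_nonneg ((∑ i ∈ s.filter P, f i) - ∑ i ∈ s.filter (¬ P ·), f i)]

lemma mul_sum_sum_le_card_mul {ρ c : ℝ} (S : Finset κ) (T : Finset ι) (g : ι → κ → ℝ)
    (h : ∀ i ∈ T, ρ * ∑ j ∈ S, g i j ≤ c) : ρ * ∑ j ∈ S, ∑ i ∈ T, g i j ≤ #T * c := by
  rw [sum_comm, mul_sum, ← nsmul_eq_mul]
  exact sum_le_card_nsmul _ _ _ h

lemma mul_sum_sq_sum_le_of_edge_bound [Fintype κ] (A : ι → κ → ℝ) (T : Finset ι) (S : Finset κ)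
    {ρ τ γ W : ℝ} {t : ℕ} (hρ : 0 ≤ ρ) (hW : 0 ≤ W) (hT : #T = t)
    (hWedge : ∀ j ∈ S, (#(T.filter (fun i => τ ≤ |A i j|)) : ℝ) ≤ W)
    (hnorm : ∀ i, ρ * ∑ j, A i j ^ 2 ≤ 1)
    (hsmallvar : ∀ i, ρ * ∑ j ∈ univ.filter (fun j => |A i j| ≤ τ), A i j ^ 2 ≤ γ) :
    ρ * ∑ j ∈ S, (∑ i ∈ T, A i j) ^ 2 ≤ 2 * t * W + 2 * (t : ℝ) ^ 2 * γ := by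
  set small : ι → κ → ℝ := fun i j => if ¬ τ ≤ |A i j| then A i j ^ 2 else 0
  have hsplit : ∀ j ∈ S, (∑ i ∈ T, A i j) ^ 2 ≤
      2 * W * ∑ i ∈ T, A i j ^ 2 + 2 * t * ∑ i ∈ T, small i j := by
    intro j hj
    refine (sq_sum_le_of_split T (fun i => τ ≤ |A i j|) (A · j)).trans ?_
    rw [hT, ← sum_filter]
    gcongr
    · exact hWedge j hj
    · exact filter_subset _ _
  have hlarge := mul_sum_sum_le_card_mul S T (fun i j => A i j ^ 2) fun i _ =>
    (mul_le_mul_of_nonneg_left (sum_le_sum_of_subset_of_nonneg (subset_univ _)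
      fun _ _ _ => sq_nonneg _) hρ).trans (hnorm i)
  have hsmall := mul_sum_sum_le_card_mul S T small fun i _ => by
    refine le_trans ?_ (hsmallvar i)
    rw [← sum_filter]
    refine mul_le_mul_of_nonneg_left (sum_le_sum_of_subset_of_nonneg (fun j hj => ?_)
      fun _ _ _ => sq_nonneg _) hρ
    simp only [mem_filter, not_le] at hj ⊢
    exact ⟨mem_univ j, hj.2.le⟩
  have hsum := mul_le_mul_of_nonneg_left (sum_le_sum hsplit) hρ
  rw [sum_add_distrib, ← mul_sum, ← mul_sum] at hsum
  rw [hT] at hlarge hsmall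
  nlinarith [mul_le_mul_of_nonneg_left hlarge hW, mul_le_mul_of_nonneg_left hsmall t.cast_nonneg]

end Algebra

theorem stmt_16_general {Ω : Type*} [MeasurableSpace Ω] (μ : Measure Ω) [IsProbabilityMeasure μ]
    (p m : ℕ) (A : Fin p → Fin m → ℝ) (T : Finset (Fin p)) (S : Finset (Fin m))
    (x : Fin m → Ω → ℝ) (ρ τ γ W : ℝ) (t : ℕ)
    (hρ : 0 < ρ) (hW : 0 ≤ W)
    (hmeas : ∀ k, Measurable (x k))
    (hx01 : ∀ k ω, x k ω = 0 ∨ x k ω = 1)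
    (hxρ : ∀ k, μ {ω | x k ω = 1} = ENNReal.ofReal ρ)
    (hind : iIndepFun x μ)
    (hT : T.card = t)
    (hWedge : ∀ j ∈ S, ((T.filter (fun i => τ ≤ |A i j|)).card : ℝ) ≤ W)
    (hnorm : ∀ i : Fin p, ρ * ∑ j, (A i j) ^ 2 ≤ 1)
    (hsmallvar : ∀ i : Fin p, ρ * ∑ j ∈ univ.filter (fun j => |A i j| ≤ τ), (A i j) ^ 2 ≤ γ) :
    variance (fun ω => ∑ j ∈ S, (∑ i ∈ T, A i j) * x j ω) μ ≤
        ρ * ∑ j ∈ S, (∑ i ∈ T, A i j) ^ 2 ∧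
      ρ * ∑ j ∈ S, (∑ i ∈ T, A i j) ^ 2 ≤ 2 * t * W + 2 * (t : ℝ) ^ 2 * γ := by
  refine ⟨variance_sum_const_mul_le S _ hind (fun j _ => memLp_two_of_zero_one (hmeas j) (hx01 j))
    fun j _ => ?_, mul_sum_sq_sum_le_of_edge_bound A T S hρ.le hW hT hWedge hnorm hsmallvar⟩
  · simpa [measureReal_def, hxρ j, hρ.le] using
      variance_le_measureReal_of_zero_one (μ := μ) (hmeas j) (hx01 j)

/-- Variance bound in the general case: if each feature `j ∈ S` has at most `W`
`G_τ`-edges into the pixel set `T` of size `t`, every pixel satisfies the variance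
normalization `ρ ∑_j A_{ij}² ≤ 1`, and the small entries contribute variance at most `γ`
per pixel, then `Var[∑_{j ∈ S} β_{j,T} x_j] = ρ ∑_{j∈S} β_{j,T}² ≤ 2 t W + 2 t² γ`. -/
theorem stmt_16 {Ω : Type*} [MeasurableSpace Ω] (μ : Measure Ω) [IsProbabilityMeasure μ]
    (p m : ℕ) (A : Fin p → Fin m → ℝ) (T : Finset (Fin p)) (S : Finset (Fin m))
    (x : Fin m → Ω → ℝ) (ρ τ γ W : ℝ) (t : ℕ)
    (hρ : 0 < ρ) (hτ : 0 < τ) (hγ : 0 ≤ γ) (hW : 0 ≤ W)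
    (hmeas : ∀ k, Measurable (x k))
    (hx01 : ∀ k ω, x k ω = 0 ∨ x k ω = 1)
    (hxρ : ∀ k, μ {ω | x k ω = 1} = ENNReal.ofReal ρ)
    (hind : iIndepFun x μ)
    (hT : T.card = t)
    (hWedge : ∀ j ∈ S, ((T.filter (fun i => τ ≤ |A i j|)).card : ℝ) ≤ W)
    (hnorm : ∀ i : Fin p, ρ * ∑ j, (A i j) ^ 2 ≤ 1)
    (hsmallvar : ∀ i : Fin p, ρ * ∑ j ∈ univ.filter (fun j => |A i j| ≤ τ), (A i j) ^ 2 ≤ γ) :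
    variance (fun ω => ∑ j ∈ S, (∑ i ∈ T, A i j) * x j ω) μ ≤
        ρ * ∑ j ∈ S, (∑ i ∈ T, A i j) ^ 2 ∧
      ρ * ∑ j ∈ S, (∑ i ∈ T, A i j) ^ 2 ≤ 2 * t * W + 2 * (t : ℝ) ^ 2 * γ :=
  stmt_16_general μ p m A T S x ρ τ γ W t hρ hW hmeas hx01 hxρ hind hT hWedge hnorm hsmallvar
end
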